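/- As an identity of formal power series in q, 40q²P(q³)⁸X(−q³)²Φ(−q⁹)⁶ − 32q²P(q³)⁷X(−q³)Φ(−q⁹)⁷Ψ(q⁹) + 10q²P(q³)⁶Φ(−q⁹)⁸Ψ(q⁹)² = 2·3²·q²·(q⁶;q⁶)_∞⁶ (q⁹;q⁹)_∞²⁶ / ((q³;q³)_∞⁶ (q¹⁸;q¹⁸)_∞¹⁰). -/

import Mathlib

open PowerSeries

/-- The infinite product `(q^j; q^k)_∞ = ∏_{n ≥ 0} (1 - q^(j + k*n))` as a formal power
series over `ℤ`: for `j ≥ 1` its `n`-th coefficient is the (stable) `n`-th coefficient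
of the partial products `∏_{m < n+1} (1 - q^(j + k*m))`. -/
noncomputable def qp (j k : ℕ) : PowerSeries ℤ :=
  PowerSeries.mk fun n =>
    PowerSeries.coeff n
      (∏ m ∈ Finset.range (n + 1), (1 - (PowerSeries.X : PowerSeries ℤ) ^ (j + k * m)))

/-- Substitution of `q^k` for `q` in a formal power series (for `k ≥ 1`). -/
noncomputable def substQ (k : ℕ) (f : PowerSeries ℤ) : PowerSeries ℤ :=
  PowerSeries.mk fun n => if k ∣ n then PowerSeries.coeff (n / k) f else 0

/-- `Φ(-q) = (q;q)_∞² / (q²;q²)_∞`. -/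
noncomputable def Phi : PowerSeries ℤ := qp 1 1 ^ 2 * Ring.inverse (qp 2 2)

/-- `Ψ(q) = (q²;q²)_∞ / (q;q²)_∞`. -/
noncomputable def Psi : PowerSeries ℤ := qp 2 2 * Ring.inverse (qp 1 2)

/-- `P(q) = (q²;q⁶)_∞ (q⁴;q⁶)_∞ (q³;q³)_∞² / (q;q)_∞`. -/
noncomputable def Pq : PowerSeries ℤ := qp 2 6 * qp 4 6 * qp 3 3 ^ 2 * Ring.inverse (qp 1 1)

/-- `X(-q) = (q;q)_∞ (q⁶;q⁶)_∞² / ((q²;q²)_∞ (q³;q³)_∞)`. -/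
noncomputable def Xq : PowerSeries ℤ := qp 1 1 * qp 6 6 ^ 2 * Ring.inverse (qp 2 2 * qp 3 3)

/-- `Φ(-q³)` -/ noncomputable def Phi3 : PowerSeries ℤ := substQ 3 Phi
/-- `Φ(-q⁹)` -/ noncomputable def Phi9 : PowerSeries ℤ := substQ 9 Phi
/-- `Ψ(q³)` -/ noncomputable def Psi3 : PowerSeries ℤ := substQ 3 Psi
/-- `Ψ(q⁹)` -/ noncomputable def Psi9 : PowerSeries ℤ := substQ 9 Psi
/-- `P(q³)` -/ noncomputable def P3 : PowerSeries ℤ := substQ 3 Pq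
/-- `X(-q³)` -/ noncomputable def X3 : PowerSeries ℤ := substQ 3 Xq

/-!
Every series involved is a quotient of products `(q^a;q^a)_∞`, using the dissections
`(q;q)_∞ = (q;q²)_∞ (q²;q²)_∞` and `(q²;q²)_∞ = (q²;q⁶)_∞ (q⁴;q⁶)_∞ (q⁶;q⁶)_∞`.
The key relation is `P(q) X(-q) = (q³;q³)_∞ (q⁶;q⁶)_∞ = Φ(-q³) Ψ(q³)`: at `q³` it makes the
three terms on the left multiples of the same monomial `q² P(q³)⁶ Φ(-q⁹)⁸ Ψ(q⁹)²`, so the left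
side is `(40 - 32 + 10)` times it, and that monomial is then evaluated as a product.
Infinite products are compared through their partial products, which agree with them
modulo `X ^ N`.
-/

open Finset

noncomputable def qpPartial (j k N : ℕ) : PowerSeries ℤ :=
  ∏ m ∈ range N, (1 - X ^ (j + k * m))

section Congruence

variable {R : Type*} [CommRing R] {f g : PowerSeries R}

theorem smodEq_X_pow_iff {N : ℕ} :
    f ≡ g [SMOD Ideal.span {(X : PowerSeries R) ^ N}] ↔ ∀ n < N, coeff n f = coeff n g := by
  simp only [SModEq.sub_mem, Ideal.mem_span_singleton, X_pow_dvd_iff, map_sub, sub_eq_zero]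

theorem eq_of_forall_smodEq_X_pow
    (h : ∀ N, f ≡ g [SMOD Ideal.span {(X : PowerSeries R) ^ N}]) : f = g :=
  ext fun n => smodEq_X_pow_iff.1 (h (n + 1)) n n.lt_succ_self

theorem SModEq.of_X_pow_le {N M : ℕ} (hNM : N ≤ M)
    (h : f ≡ g [SMOD Ideal.span {(X : PowerSeries R) ^ M}]) :
    f ≡ g [SMOD Ideal.span {(X : PowerSeries R) ^ N}] :=
  h.mono (Ideal.span_singleton_le_span_singleton.2 (pow_dvd_pow X hNM))

end Congruence

theorem qpPartial_smodEq {j k N M : ℕ} (hk : 1 ≤ k) (hNM : N ≤ M) :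
    qpPartial j k M ≡ qpPartial j k N [SMOD Ideal.span {(X : PowerSeries ℤ) ^ N}] := by
  induction M, hNM using Nat.le_induction with
  | base => rfl
  | succ M hNM ih =>
    have hX : (X : PowerSeries ℤ) ^ (j + k * M) ≡ 0 [SMOD Ideal.span {X ^ N}] :=
      SModEq.zero.2 (Ideal.mem_span_singleton.2 (pow_dvd_pow X (by nlinarith)))
    calc qpPartial j k (M + 1) = qpPartial j k M * (1 - X ^ (j + k * M)) := prod_range_succ _ _
      _ ≡ qpPartial j k N * (1 - 0) [SMOD Ideal.span {X ^ N}] := ih.mul (SModEq.rfl.sub hX)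
      _ = qpPartial j k N := by rw [sub_zero, mul_one]

theorem coeff_qp_eq_coeff_qpPartial {j k n N : ℕ} (hk : 1 ≤ k) (hN : n < N) :
    coeff n (qp j k) = coeff n (qpPartial j k N) := by
  rw [qp, coeff_mk]
  exact (smodEq_X_pow_iff.1 (qpPartial_smodEq hk hN) n n.lt_succ_self).symm

theorem qp_smodEq_qpPartial {j k : ℕ} (hk : 1 ≤ k) (N : ℕ) :
    qp j k ≡ qpPartial j k N [SMOD Ideal.span {(X : PowerSeries ℤ) ^ N}] :=
  smodEq_X_pow_iff.2 fun _ hn => coeff_qp_eq_coeff_qpPartial hk hn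

theorem isUnit_qp {j : ℕ} (hj : j ≠ 0) (k : ℕ) : IsUnit (qp j k) := by
  rw [isUnit_iff_constantCoeff, ← coeff_zero_eq_constantCoeff_apply, qp, coeff_mk,
    prod_range_one, map_sub, coeff_one, coeff_X_pow, if_pos rfl, if_neg (by omega), sub_zero]
  exact isUnit_one

theorem qpPartial_mul (j k m N : ℕ) :
    qpPartial j k (m * N) = ∏ i ∈ range m, qpPartial (j + i * k) (m * k) N := by
  induction N with
  | zero => simp [qpPartial]
  | succ N ih =>
    simp only [qpPartial, Nat.mul_succ, prod_range_add, prod_range_succ, prod_mul_distrib] at ih ⊢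
    rw [ih]
    congr 1
    refine prod_congr rfl fun i _ => ?_
    ring_nf

theorem qp_eq_prod {j k m : ℕ} (hk : 1 ≤ k) (hm : 1 ≤ m) :
    qp j k = ∏ i ∈ range m, qp (j + i * k) (m * k) :=
  eq_of_forall_smodEq_X_pow fun N =>
    calc qp j k ≡ qpPartial j k (m * N) [SMOD Ideal.span {X ^ N}] :=
          (qp_smodEq_qpPartial hk _).of_X_pow_le (Nat.le_mul_of_pos_left N hm)
      _ = ∏ i ∈ range m, qpPartial (j + i * k) (m * k) N := qpPartial_mul j k m N
      _ ≡ ∏ i ∈ range m, qp (j + i * k) (m * k) [SMOD Ideal.span {X ^ N}] :=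
          SModEq.prod fun _ _ => (qp_smodEq_qpPartial (one_le_mul hm hk) N).symm

theorem substQ_eq_expand {s : ℕ} (hs : s ≠ 0) (f : PowerSeries ℤ) :
    substQ s f = expand s hs f := by
  ext n
  rw [coeff_expand, substQ, coeff_mk]

theorem expand_qpPartial {s : ℕ} (hs : s ≠ 0) (j k N : ℕ) :
    expand s hs (qpPartial j k N) = qpPartial (s * j) (s * k) N := by
  simp only [qpPartial, map_prod, map_sub, map_one, map_pow, expand_X, ← pow_mul, mul_add,
    mul_assoc]

theorem expand_qp {s : ℕ} (hs : s ≠ 0) (j : ℕ) {k : ℕ} (hk : 1 ≤ k) :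
    expand s hs (qp j k) = qp (s * j) (s * k) := by
  ext n
  rw [coeff_qp_eq_coeff_qpPartial (one_le_mul (by omega) hk) n.lt_succ_self,
    ← expand_qpPartial hs, coeff_expand, coeff_expand]
  split_ifs
  · exact coeff_qp_eq_coeff_qpPartial hk ((Nat.div_le_self n s).trans_lt n.lt_succ_self)
  · rfl

theorem qp_one_one : qp 1 1 = qp 1 2 * qp 2 2 := by
  simpa [prod_range_succ] using qp_eq_prod (j := 1) (k := 1) (m := 2) le_rfl one_le_two

theorem qp_two_two : qp 2 2 = qp 2 6 * qp 4 6 * qp 6 6 := by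
  simpa [prod_range_succ] using qp_eq_prod (j := 2) (k := 2) (m := 3) one_le_two (by norm_num)

theorem Phi_mul_qp : Phi * qp 2 2 = qp 1 1 ^ 2 :=
  (Ring.eq_mul_inverse_iff_mul_eq _ _ _ (isUnit_qp two_ne_zero 2)).1 rfl

theorem Psi_mul_qp : Psi * qp 1 1 = qp 2 2 ^ 2 := by
  rw [qp_one_one, ← mul_assoc, Psi, Ring.inverse_mul_cancel_right _ _ (isUnit_qp one_ne_zero 2),
    sq]

theorem Pq_mul_qp : Pq * (qp 1 1 * qp 6 6) = qp 2 2 * qp 3 3 ^ 2 := by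
  rw [← mul_assoc, Pq, Ring.inverse_mul_cancel_right _ _ (isUnit_qp one_ne_zero 1), qp_two_two]
  ring

theorem Xq_mul_qp : Xq * (qp 2 2 * qp 3 3) = qp 1 1 * qp 6 6 ^ 2 :=
  (Ring.eq_mul_inverse_iff_mul_eq _ _ _
    ((isUnit_qp two_ne_zero 2).mul (isUnit_qp three_ne_zero 3))).1 rfl

theorem Pq_mul_Xq : Pq * Xq = qp 3 3 * qp 6 6 := by
  have hu : IsUnit (qp 1 1 * qp 6 6 * (qp 2 2 * qp 3 3)) :=
    ((isUnit_qp one_ne_zero 1).mul (isUnit_qp (by norm_num) 6)).mul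
      ((isUnit_qp two_ne_zero 2).mul (isUnit_qp three_ne_zero 3))
  apply hu.mul_right_cancel
  calc Pq * Xq * (qp 1 1 * qp 6 6 * (qp 2 2 * qp 3 3))
      = Pq * (qp 1 1 * qp 6 6) * (Xq * (qp 2 2 * qp 3 3)) := by ring
    _ = _ := by rw [Pq_mul_qp, Xq_mul_qp]; ring

theorem Phi_mul_Psi : Phi * Psi = qp 1 1 * qp 2 2 := by
  have hu : IsUnit (qp 2 2 * qp 1 1) := (isUnit_qp two_ne_zero 2).mul (isUnit_qp one_ne_zero 1)
  apply hu.mul_right_cancel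
  calc Phi * Psi * (qp 2 2 * qp 1 1) = Phi * qp 2 2 * (Psi * qp 1 1) := by ring
    _ = _ := by rw [Phi_mul_qp, Psi_mul_qp]; ring

theorem P3_mul_X3 : P3 * X3 = Phi9 * Psi9 := by
  have h3 := congrArg (expand 3 three_ne_zero) Pq_mul_Xq
  have h9 := congrArg (expand 9 (by norm_num)) Phi_mul_Psi
  simp only [map_mul, expand_qp, Nat.one_le_ofNat, le_refl, Nat.reduceMul] at h3 h9
  rw [P3, X3, Phi9, Psi9, substQ_eq_expand three_ne_zero, substQ_eq_expand three_ne_zero,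
    substQ_eq_expand (by norm_num), substQ_eq_expand (by norm_num), h3, h9]

theorem P3_mul_qp : P3 * (qp 3 3 * qp 18 18) = qp 6 6 * qp 9 9 ^ 2 := by
  have h := congrArg (expand 3 three_ne_zero) Pq_mul_qp
  simp only [map_mul, map_pow, expand_qp, Nat.one_le_ofNat, le_refl, Nat.reduceMul] at h
  rwa [P3, substQ_eq_expand three_ne_zero]

theorem Phi9_mul_qp : Phi9 * qp 18 18 = qp 9 9 ^ 2 := by
  have h := congrArg (expand 9 (by norm_num)) Phi_mul_qp
  simp only [map_mul, map_pow, expand_qp, Nat.one_le_ofNat, le_refl, Nat.reduceMul] at h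
  rwa [Phi9, substQ_eq_expand (by norm_num)]

theorem Psi9_mul_qp : Psi9 * qp 9 9 = qp 18 18 ^ 2 := by
  have h := congrArg (expand 9 (by norm_num)) Psi_mul_qp
  simp only [map_mul, map_pow, expand_qp, Nat.one_le_ofNat, le_refl, Nat.reduceMul] at h
  rwa [Psi9, substQ_eq_expand (by norm_num)]

theorem P3_pow_mul_Phi9_pow_mul_Psi9_sq :
    P3 ^ 6 * Phi9 ^ 8 * Psi9 ^ 2 =
      qp 6 6 ^ 6 * qp 9 9 ^ 26 * Ring.inverse (qp 3 3 ^ 6 * qp 18 18 ^ 10) := by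
  have h3 : IsUnit (qp 3 3) := isUnit_qp three_ne_zero 3
  have h9 : IsUnit (qp 9 9) := isUnit_qp (by norm_num) 9
  have h18 : IsUnit (qp 18 18) := isUnit_qp (by norm_num) 18
  rw [Ring.eq_mul_inverse_iff_mul_eq _ _ _ ((h3.pow 6).mul (h18.pow 10))]
  apply ((h9.pow 2).mul (h18.pow 4)).mul_right_cancel
  calc P3 ^ 6 * Phi9 ^ 8 * Psi9 ^ 2 * (qp 3 3 ^ 6 * qp 18 18 ^ 10) * (qp 9 9 ^ 2 * qp 18 18 ^ 4)
      = (P3 * (qp 3 3 * qp 18 18)) ^ 6 * (Phi9 * qp 18 18) ^ 8 * (Psi9 * qp 9 9) ^ 2 := by ring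
    _ = _ := by rw [P3_mul_qp, Phi9_mul_qp, Psi9_mul_qp]; ring

theorem A_eval :
    40 * (PowerSeries.X : PowerSeries ℤ) ^ 2 * P3 ^ 8 * X3 ^ 2 * Phi9 ^ 6 - 32 * (PowerSeries.X : PowerSeries ℤ) ^ 2 * P3 ^ 7 * X3 * Phi9 ^ 7 * Psi9 + 10 * (PowerSeries.X : PowerSeries ℤ) ^ 2 * P3 ^ 6 * Phi9 ^ 8 * Psi9 ^ 2 = 2 * 3 ^ 2 * (PowerSeries.X : PowerSeries ℤ) ^ 2 * (qp 6 6 ^ 6 * qp 9 9 ^ 26 * Ring.inverse (qp 3 3 ^ 6 * qp 18 18 ^ 10)) := by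
  calc _ = X ^ 2 * P3 ^ 6 * Phi9 ^ 6 *
        (40 * (P3 * X3) ^ 2 - 32 * (P3 * X3) * (Phi9 * Psi9) + 10 * (Phi9 * Psi9) ^ 2) := by ring
    _ = 2 * 3 ^ 2 * X ^ 2 * (P3 ^ 6 * Phi9 ^ 8 * Psi9 ^ 2) := by rw [P3_mul_X3]; ring
    _ = _ := by rw [P3_pow_mul_Phi9_pow_mul_Psi9_sq]
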